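/- Let R be a commutative ring and d_1,…,d_6 ∈ R. For distinct indices i,j,k define [ijk] := (d_i−d_j)(d_i−d_k)(d_j−d_k)(d_i+d_j+d_k). Then [134][156][235][246] − [135][146][234][256] = (d_1+d_2+d_3+d_4+d_5+d_6) · ∏_{1≤i<j≤6} (d_i−d_j). -/
import Mathlib


/-- For six points on a cuspidal cubic parametrized by `d₁,…,d₆`, with bracket
`[ijk] = (dᵢ−dⱼ)(dᵢ−dₖ)(dⱼ−dₖ)(dᵢ+dⱼ+dₖ)`, the condition for the six points
to lie on a conic factors:
`[134][156][235][246] − [135][146][234][256]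
  = (d₁+d₂+d₃+d₄+d₅+d₆) · ∏_{1≤i<j≤6} (dᵢ−dⱼ)`. -/
theorem conic_condition_factors (R : Type*) [CommRing R] (d₁ d₂ d₃ d₄ d₅ d₆ : R) :
    ((d₁ - d₃) * (d₁ - d₄) * (d₃ - d₄) * (d₁ + d₃ + d₄)) *
      ((d₁ - d₅) * (d₁ - d₆) * (d₅ - d₆) * (d₁ + d₅ + d₆)) *
      ((d₂ - d₃) * (d₂ - d₅) * (d₃ - d₅) * (d₂ + d₃ + d₅)) *
      ((d₂ - d₄) * (d₂ - d₆) * (d₄ - d₆) * (d₂ + d₄ + d₆)) -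
    ((d₁ - d₃) * (d₁ - d₅) * (d₃ - d₅) * (d₁ + d₃ + d₅)) *
      ((d₁ - d₄) * (d₁ - d₆) * (d₄ - d₆) * (d₁ + d₄ + d₆)) *
      ((d₂ - d₃) * (d₂ - d₄) * (d₃ - d₄) * (d₂ + d₃ + d₄)) *
      ((d₂ - d₅) * (d₂ - d₆) * (d₅ - d₆) * (d₂ + d₅ + d₆))
    = (d₁ + d₂ + d₃ + d₄ + d₅ + d₆) *
        ((d₁ - d₂) * (d₁ - d₃) * (d₁ - d₄) * (d₁ - d₅) * (d₁ - d₆) *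
         (d₂ - d₃) * (d₂ - d₄) * (d₂ - d₅) * (d₂ - d₆) *
         (d₃ - d₄) * (d₃ - d₅) * (d₃ - d₆) *
         (d₄ - d₅) * (d₄ - d₆) *
         (d₅ - d₆)) := by
  ring
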